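/- arXiv:2207.10254 — 6 statements merged into one kernel-verified Lean document; each statement's English description precedes it below -/
import Mathlib

section
/- Consider a two-stripe circulant TSP instance on n vertices with stripe lengths a₁, a₂, gcd(n, a₁, a₂) = 1, where edges of length a₁ cost 0 and edges of length a₂ cost 1. If there exists an integer y with 0 ≤ y ≤ g₁ (where g₁ = gcd(n, a₁)) such that (2y − g₁)·a₁ + g₁·a₂ ≡ 0 (mod n), then there exists a Hamiltonian cycle in C⟨{a₁, a₂}⟩ of cost exactly g₁. -/
/-!
Let `g = gcd(n, a₁)` and `m = n / g`, the additive order of `a₁`. The cosets of `⟨a₁⟩` are the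
`g` cycles of `a₁`-edges, and since `a₂` is a unit mod `g` they are the cosets `q • a₂ + ⟨a₁⟩`,
`0 ≤ q < g`. The tour runs through each coset in `m - 1` steps of `±a₁` and then jumps to the next
one along an `a₂`-edge, so it uses exactly `g` edges of length `a₂`. Traversing a coset in
direction `±a₁` moves its exit point by `∓a₁` relative to its entry point; running the first `y`
cosets backwards and the other `g - y` forwards gives total displacement `g • a₂ + (2y - g) • a₁`,
which vanishes by hypothesis, so the tour closes up.
-/

namespace SimpleGraph.Walk

variable {V : Type*} {G : SimpleGraph V}

def ofSeq (f : ℕ → V) (hf : ∀ i, G.Adj (f i) (f (i + 1))) : (k : ℕ) → G.Walk (f 0) (f k)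
  | 0 => nil
  | k + 1 => (ofSeq f hf k).concat (hf k)

variable (f : ℕ → V) (hf : ∀ i, G.Adj (f i) (f (i + 1)))

@[simp] lemma length_ofSeq (k : ℕ) : (ofSeq f hf k).length = k := by
  induction k with
  | zero => rfl
  | succ k ih => simp [ofSeq, ih]

lemma support_ofSeq (k : ℕ) : (ofSeq f hf k).support = (List.range (k + 1)).map f := by
  induction k with
  | zero => rfl
  | succ k ih => simp [ofSeq, support_concat, ih, List.range_succ (n := k + 1)]

lemma darts_ofSeq (k : ℕ) :
    (ofSeq f hf k).darts = (List.range k).map fun i => ⟨(f i, f (i + 1)), hf i⟩ := by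
  induction k with
  | zero => rfl
  | succ k ih => simp [ofSeq, darts_concat, ih, List.range_succ (n := k)]

lemma exists_isHamiltonianCycle_of_injOn [Fintype V] [DecidableEq V] {n : ℕ} (hn : 3 ≤ n)
    (hcard : Fintype.card V = n) (hper : f n = f 0) (hinj : Set.InjOn f (Set.Iio n)) :
    ∃ w : G.Walk (f 0) (f 0), w.IsHamiltonianCycle ∧
      w.darts = (List.range n).map fun i => ⟨(f i, f (i + 1)), hf i⟩ := by
  set w := (ofSeq f hf n).copy rfl hper
  have hlen : w.length = n := by simp [w]
  have hnil : ¬ w.Nil := by rw [← length_eq_zero_iff]; omega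
  refine ⟨w, ?_, by simp [w, darts_ofSeq]⟩
  rw [isHamiltonianCycle_iff_isCycle_and_length_eq, isCycle_iff_isPath_tail_and_le_length,
    isPath_def, support_tail_of_not_nil _ hnil, hlen, hcard]
  refine ⟨⟨?_, hn⟩, rfl⟩
  obtain ⟨k, rfl⟩ : ∃ k, n = k + 1 := ⟨n - 1, by omega⟩
  have htail : w.support.tail = ((List.range (k + 1)).map f).rotate 1 := by
    rw [support_copy, support_ofSeq, List.range_succ_eq_map, List.map_cons, List.tail_cons]
    conv_rhs => rw [List.range_succ_eq_map]
    rw [List.range_succ]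
    simp [hper]
  rw [htail, List.nodup_rotate]
  exact List.nodup_range.map_on fun i hi j hj hij =>
    hinj (Set.mem_Iio.2 (List.mem_range.1 hi)) (Set.mem_Iio.2 (List.mem_range.1 hj)) hij

end SimpleGraph.Walk

theorem SimpleGraph.circulantGraph_adj_add {G : Type*} [AddCommGroup G] {s : Set G} {u d : G}
    (hd : d ≠ 0) (hs : d ∈ s ∨ -d ∈ s) : (circulantGraph s).Adj u (u + d) := by
  rw [circulantGraph_adj]
  simpa [hd, or_comm] using hs

theorem Nat.count_mod_eq_pred_mul {m : ℕ} (hm : 0 < m) (g : ℕ) :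
    Nat.count (fun t => t % m = m - 1) (m * g) = g := by
  induction g with
  | zero => simp
  | succ g ih =>
    rw [mul_add, mul_one, Nat.count_add, ih, add_right_inj, Nat.count_eq_card_filter_range,
      Finset.card_eq_one]
    refine ⟨m - 1, Finset.ext fun k => ?_⟩
    simp only [Finset.mem_filter, Finset.mem_range, Finset.mem_singleton, Nat.mul_add_mod]
    constructor
    · rintro ⟨hk, h⟩; rwa [Nat.mod_eq_of_lt hk] at h
    · rintro rfl; exact ⟨by omega, Nat.mod_eq_of_lt (by omega)⟩

namespace TwoStripe

variable {A : Type*} [AddCommGroup A] (a b : A) (m y : ℕ)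

-- Coset `q` is traversed by the steps `t` with `t / m = q`, from `segStart a b y q` in direction
-- `dir y q • a`.
def dir (q : ℕ) : ℤ := if q < y then -1 else 1

-- `2 * min q y - q` is minus the sum of `dir y i` over `i < q`.
def segStart (q : ℕ) : A := q • b + (2 * (min q y : ℕ) - q : ℤ) • a

def tour (t : ℕ) : A := segStart a b y (t / m) + (dir y (t / m) * (t % m : ℕ)) • a

lemma tour_sub_mem_zmultiples (t : ℕ) :
    tour a b m y t - (t / m) • b ∈ AddSubgroup.zmultiples a :=
  ⟨2 * (min (t / m) y : ℕ) - (t / m : ℕ) + dir y (t / m) * (t % m : ℕ), by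
    simp only [tour, segStart]; module⟩

variable {m y}

lemma isUnit_dir (q : ℕ) : IsUnit (dir y q) := by
  unfold dir; split_ifs <;> simp

lemma segStart_succ (q : ℕ) : segStart a b y (q + 1) = segStart a b y q + b - dir y q • a := by
  unfold segStart dir
  rcases lt_or_ge q y with h | h
  · rw [min_eq_left h.le, min_eq_left h, if_pos h]
    push_cast
    module
  · rw [min_eq_right h, min_eq_right (by omega), if_neg (by omega)]
    push_cast
    module

lemma tour_succ (hm : m • a = 0) (hm0 : 0 < m) (t : ℕ) :
    tour a b m y (t + 1) = tour a b m y t + if t % m = m - 1 then b else dir y (t / m) • a := by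
  have ht := Nat.div_add_mod t m
  have hr := Nat.mod_lt t hm0
  by_cases h : t % m = m - 1
  · have ht1 : t + 1 = m * (t / m + 1) := by rw [mul_add, mul_one]; omega
    have hwrap : (dir y (t / m) * ((m - 1 : ℕ) : ℤ)) • a = -(dir y (t / m) • a) := by
      rw [Nat.cast_sub hm0, Nat.cast_one, mul_sub_one, sub_smul, mul_smul, natCast_zsmul, hm,
        smul_zero, zero_sub]
    rw [if_pos h, tour, tour, ht1, Nat.mul_div_cancel_left _ hm0, Nat.mul_mod_right,
      segStart_succ, h, hwrap]
    simp only [Nat.cast_zero, mul_zero, zero_smul, add_zero]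
    abel
  · have ht1 : t + 1 = (t % m + 1) + m * (t / m) := by omega
    have hdiv : (t + 1) / m = t / m := by
      rw [ht1, Nat.add_mul_div_left _ _ hm0, Nat.div_eq_of_lt (by omega), zero_add]
    have hmod : (t + 1) % m = t % m + 1 := by
      rw [ht1, Nat.add_mul_mod_self_left, Nat.mod_eq_of_lt (by omega)]
    rw [if_neg h, tour, tour, hdiv, hmod]
    push_cast
    module

lemma tour_injOn {g : ℕ} (hm : addOrderOf a = m)
    (hb : ∀ k : ℤ, k • b ∈ AddSubgroup.zmultiples a → (g : ℤ) ∣ k) :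
    Set.InjOn (tour a b m y) (Set.Iio (m * g)) := by
  intro s (hs : s < m * g) t (ht : t < m * g) hst
  have hseg : s / m = t / m := by
    have hmem : ((s / m : ℕ) - (t / m : ℕ) : ℤ) • b ∈ AddSubgroup.zmultiples a := by
      have := AddSubgroup.sub_mem _ (tour_sub_mem_zmultiples a b m y t)
        (tour_sub_mem_zmultiples a b m y s)
      rw [hst] at this
      convert this using 1
      rw [sub_smul, natCast_zsmul, natCast_zsmul]
      abel
    have hlt : |((s / m : ℕ) - (t / m : ℕ) : ℤ)| < g := by
      have hs' := Nat.div_lt_of_lt_mul hs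
      have ht' := Nat.div_lt_of_lt_mul ht
      generalize s / m = p at hs' ⊢
      generalize t / m = r at ht' ⊢
      rw [abs_lt]; constructor <;> omega
    have := Int.eq_zero_of_abs_lt_dvd (hb _ hmem) hlt
    omega
  have hres : s % m = t % m := by
    have h0 : (dir y (t / m) * ((t % m : ℕ) - (s % m : ℕ) : ℤ)) • a = 0 := by
      rw [tour, tour, hseg] at hst
      rw [mul_sub, sub_smul, add_left_cancel hst, sub_self]
    rw [← addOrderOf_dvd_iff_zsmul_eq_zero, hm, (isUnit_dir _).dvd_mul_left] at h0
    simpa [Nat.ModEq, Nat.mod_mod] using (Nat.modEq_iff_dvd.2 h0)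
  rw [← Nat.div_add_mod s m, ← Nat.div_add_mod t m, hseg, hres]

lemma tour_mul_eq_tour_zero (hm0 : 0 < m) {g : ℕ} (hy : y ≤ g)
    (hclose : g • b + (2 * y - g : ℤ) • a = 0) :
    tour a b m y (m * g) = tour a b m y 0 := by
  simp [tour, segStart, Nat.mul_div_cancel_left _ hm0, min_eq_right hy, hclose]

lemma dir_zsmul_eq (q : ℕ) : dir y q • a = -a ∨ dir y q • a = a := by
  unfold dir; split_ifs <;> simp

lemma circulantGraph_adj_tour (hm : m • a = 0) (hm0 : 0 < m) (ha : a ≠ 0) (hb : b ≠ 0)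
    (t : ℕ) : (SimpleGraph.circulantGraph {a, b}).Adj (tour a b m y t) (tour a b m y (t + 1)) := by
  rw [tour_succ a b hm hm0]
  split_ifs
  · exact SimpleGraph.circulantGraph_adj_add hb (by simp)
  · rcases dir_zsmul_eq a (t / m) (y := y) with h | h <;> rw [h]
    · exact SimpleGraph.circulantGraph_adj_add (neg_ne_zero.2 ha) (by simp)
    · exact SimpleGraph.circulantGraph_adj_add ha (by simp)

lemma countP_tour_step_eq_b [DecidableEq A] (hm : m • a = 0) (hm0 : 0 < m) (hab : a ≠ b)
    (hab' : a ≠ -b) (g : ℕ) :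
    (List.range (m * g)).countP (fun t => decide
      (tour a b m y (t + 1) - tour a b m y t = b ∨ tour a b m y t - tour a b m y (t + 1) = b)) =
      g := by
  refine .trans (List.countP_congr fun t _ => ?_) (Nat.count_mod_eq_pred_mul hm0 g)
  rw [tour_succ a b hm hm0]
  split_ifs with h
  · simp [h]
  · rcases dir_zsmul_eq a (t / m) (y := y) with hd | hd <;>
      simp [h, hd, hab, hab', neg_eq_iff_eq_neg]

end TwoStripe

theorem ZMod.natCast_ne_zero_of_pos_of_lt {n k : ℕ} (hk : 0 < k) (hkn : k < n) :
    (k : ZMod n) ≠ 0 := by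
  rw [Ne, ZMod.natCast_eq_zero_iff]
  exact Nat.not_dvd_of_pos_of_lt hk hkn

theorem ZMod.gcd_dvd_of_zsmul_mem_zmultiples {n a b : ℕ} (hb : (n.gcd a).Coprime b) {k : ℤ}
    (hk : k • (b : ZMod n) ∈ AddSubgroup.zmultiples (a : ZMod n)) : (n.gcd a : ℤ) ∣ k := by
  obtain ⟨j, hj⟩ := hk
  have hjk := congrArg (ZMod.castHom (Nat.gcd_dvd_left n a) (ZMod (n.gcd a))) hj
  rw [map_zsmul, map_zsmul, map_natCast, map_natCast,
    (ZMod.natCast_eq_zero_iff _ _).2 (Nat.gcd_dvd_right n a), smul_zero, zsmul_eq_mul,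
    ← Int.cast_natCast, ← Int.cast_mul, eq_comm, ZMod.intCast_zmod_eq_zero_iff_dvd] at hjk
  exact (Nat.isCoprime_iff_coprime.2 hb).dvd_of_dvd_mul_right hjk

theorem stmt_3_general (n a₁ a₂ : ℕ)
    (ha₁ : 1 ≤ a₁) (ha₂ : 1 ≤ a₂) (hne : a₁ ≠ a₂)
    (hb₁ : 2 * a₁ ≤ n) (hb₂ : 2 * a₂ ≤ n)
    (hg : Nat.gcd (Nat.gcd n a₁) a₂ = 1)
    (hy : ∃ y : ℕ, y ≤ Nat.gcd n a₁ ∧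
      (2 * (y : ℤ) - (Nat.gcd n a₁ : ℤ)) * (a₁ : ℤ) + (Nat.gcd n a₁ : ℤ) * (a₂ : ℤ)
        ≡ 0 [ZMOD (n : ℤ)]) :
    ∃ (v : ZMod n) (w : (SimpleGraph.circulantGraph
        ({(a₁ : ZMod n), (a₂ : ZMod n)} : Set (ZMod n))).Walk v v),
      w.IsHamiltonianCycle ∧
      w.darts.countP (fun d => decide (d.toProd.2 - d.toProd.1 = (a₂ : ZMod n) ∨
        d.toProd.1 - d.toProd.2 = (a₂ : ZMod n))) = Nat.gcd n a₁ := by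
  obtain ⟨y, hyg, hcong⟩ := hy
  set g := n.gcd a₁
  have : NeZero n := ⟨by omega⟩
  have hgn : n / g * g = n := Nat.div_mul_cancel (Nat.gcd_dvd_left n a₁)
  have hm0 : 0 < n / g :=
    Nat.div_pos (Nat.gcd_le_left _ (by omega)) (Nat.gcd_pos_of_pos_left _ (by omega))
  have hord : addOrderOf (a₁ : ZMod n) = n / g := ZMod.addOrderOf_coe _ (NeZero.ne n)
  have hma : (n / g) • (a₁ : ZMod n) = 0 := hord ▸ addOrderOf_nsmul_eq_zero _
  have ha₁0 := ZMod.natCast_ne_zero_of_pos_of_lt (n := n) ha₁ (by omega)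
  have ha₂0 := ZMod.natCast_ne_zero_of_pos_of_lt (n := n) ha₂ (by omega)
  have h12 : (a₁ : ZMod n) ≠ a₂ := by
    rw [Ne, ZMod.natCast_eq_natCast_iff', Nat.mod_eq_of_lt (by omega), Nat.mod_eq_of_lt (by omega)]
    exact hne
  have h12' : (a₁ : ZMod n) ≠ -a₂ := by
    rw [Ne, eq_neg_iff_add_eq_zero, ← Nat.cast_add]
    exact ZMod.natCast_ne_zero_of_pos_of_lt (by omega) (by omega)
  have hclose : g • (a₂ : ZMod n) + (2 * y - g : ℤ) • (a₁ : ZMod n) = 0 := by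
    have := (ZMod.intCast_eq_intCast_iff _ _ n).2 hcong
    push_cast at this
    rw [nsmul_eq_mul, zsmul_eq_mul]
    push_cast
    linear_combination this
  obtain ⟨w, hw, hdarts⟩ := SimpleGraph.Walk.exists_isHamiltonianCycle_of_injOn _
    (TwoStripe.circulantGraph_adj_tour _ _ hma hm0 ha₁0 ha₂0 (y := y)) (n := n / g * g)
    (by omega) (by rw [ZMod.card, hgn]) (TwoStripe.tour_mul_eq_tour_zero _ _ hm0 hyg hclose)
    (TwoStripe.tour_injOn _ _ hord fun k => ZMod.gcd_dvd_of_zsmul_mem_zmultiples hg)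
  refine ⟨_, w, hw, ?_⟩
  rw [hdarts, List.countP_map]
  exact TwoStripe.countP_tour_step_eq_b _ _ hma hm0 h12 h12' g

/-- Two-stripe circulant TSP: if there is `0 ≤ y ≤ g₁` with
`(2y − g₁)a₁ + g₁a₂ ≡ 0 (mod n)` (where `g₁ = gcd(n,a₁)`), then the circulant graph
`C⟨{a₁,a₂}⟩` has a Hamiltonian cycle using exactly `g₁` edges of length `a₂`. -/
theorem stmt_3 (n a₁ a₂ : ℕ) (hn : 0 < n)
    (ha₁ : 1 ≤ a₁) (ha₂ : 1 ≤ a₂) (hne : a₁ ≠ a₂)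
    (hb₁ : 2 * a₁ ≤ n) (hb₂ : 2 * a₂ ≤ n)
    (hg : Nat.gcd (Nat.gcd n a₁) a₂ = 1)
    (hy : ∃ y : ℕ, y ≤ Nat.gcd n a₁ ∧
      (2 * (y : ℤ) - (Nat.gcd n a₁ : ℤ)) * (a₁ : ℤ) + (Nat.gcd n a₁ : ℤ) * (a₂ : ℤ)
        ≡ 0 [ZMOD (n : ℤ)]) :
    ∃ (v : ZMod n) (w : (SimpleGraph.circulantGraph
        ({(a₁ : ZMod n), (a₂ : ZMod n)} : Set (ZMod n))).Walk v v),
      w.IsHamiltonianCycle ∧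
      w.darts.countP (fun d => decide (d.toProd.2 - d.toProd.1 = (a₂ : ZMod n) ∨
        d.toProd.1 - d.toProd.2 = (a₂ : ZMod n))) = Nat.gcd n a₁ :=
  stmt_3_general n a₁ a₂ ha₁ ha₂ hne hb₁ hb₂ hg hy
end

section
/- In a two-stripe circulant TSP instance with gcd(n, a₁, a₂) = 1 and g₁ = gcd(n, a₁), every Hamiltonian cycle in C⟨{a₁, a₂}⟩ uses at least g₁ edges of length a₂. -/
/-!
Reduce vertices modulo `g₁ = gcd(n, a₁)`. Edges of length `a₁` stay inside a residue class, so
every edge of the cycle that changes the class has length `a₂`. A Hamiltonian cycle visits all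
`g₁ ≥ 2` classes, so it must leave each class at least once, and these exits are distinct edges.
-/

namespace SimpleGraph

namespace Walk

variable {V : Type*} {G : SimpleGraph V}

theorem exists_boundary_dart_of_mem_support {u v x : V} (c : G.Walk u u) (S : Set V)
    (hv : v ∈ c.support) (hx : x ∈ c.support) (hvS : v ∈ S) (hxS : x ∉ S) :
    ∃ d ∈ c.darts, d.fst ∈ S ∧ d.snd ∉ S := by
  classical
  obtain ⟨d, hd, hdS⟩ :=
    ((c.dropUntil v hv).append (c.takeUntil x hx)).exists_boundary_dart S hvS hxS
  rw [darts_append, List.mem_append] at hd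
  exact ⟨d, hd.elim (c.darts_dropUntil_subset_darts hv ·) (c.darts_takeUntil_subset_darts hx ·),
    hdS⟩

theorem card_le_countP_darts_map_ne {β : Type*} [Fintype β] [DecidableEq β] [Nontrivial β]
    {f : V → β} (hf : Function.Surjective f) {u : V} (c : G.Walk u u)
    (hc : ∀ x, x ∈ c.support) :
    Fintype.card β ≤ c.darts.countP (fun d => f d.fst ≠ f d.snd) := by
  have exit (b : β) : ∃ d ∈ c.darts, f d.fst = b ∧ f d.snd ≠ b := by
    obtain ⟨b', hb'⟩ := exists_ne b
    obtain ⟨x, rfl⟩ := hf b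
    obtain ⟨y, rfl⟩ := hf b'
    exact c.exists_boundary_dart_of_mem_support (f ⁻¹' {f x}) (hc x) (hc y) rfl hb'
  let exits := c.darts.filter (fun d => f d.fst ≠ f d.snd)
  calc Fintype.card β = (Finset.univ : Finset β).card := rfl
    _ ≤ (exits.map (fun d => f d.fst)).toFinset.card := Finset.card_le_card fun b _ => by
        obtain ⟨d, hd, hdb, hdne⟩ := exit b
        simp only [List.mem_toFinset, List.mem_map]
        exact ⟨d, List.mem_filter.mpr ⟨hd, by simp [hdb, Ne.symm hdne]⟩, hdb⟩
    _ ≤ (exits.map (fun d => f d.fst)).length := List.toFinset_card_le _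
    _ = c.darts.countP (fun d => f d.fst ≠ f d.snd) := by
        rw [List.length_map, List.countP_eq_length_filter]

end Walk

theorem circulantGraph_pair_sub_eq_of_map_ne {G H : Type*} [AddGroup G] [AddGroup H]
    {a b x y : G} (φ : G →+ H) (hφa : φ a = 0) (hxy : (circulantGraph {a, b}).Adj x y)
    (hφ : φ x ≠ φ y) : y - x = b ∨ x - y = b := by
  simp only [circulantGraph_adj, Set.mem_insert_iff, Set.mem_singleton_iff] at hxy
  obtain ⟨-, (hxy | hxy) | (hyx | hyx)⟩ := hxy
  · refine absurd ?_ hφ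
    rw [← sub_eq_zero, ← map_sub, hxy, hφa]
  · exact Or.inr hxy
  · refine absurd ?_ hφ
    rw [eq_comm, ← sub_eq_zero, ← map_sub, hyx, hφa]
  · exact Or.inl hyx

end SimpleGraph

theorem stmt_5_general (n a₁ a₂ : ℕ)
    (hg₁ : 1 < Nat.gcd n a₁)
    (v : ZMod n)
    (w : (SimpleGraph.circulantGraph
        ({(a₁ : ZMod n), (a₂ : ZMod n)} : Set (ZMod n))).Walk v v)
    (hw : w.IsHamiltonianCycle) :
    Nat.gcd n a₁ ≤
      w.darts.countP (fun d => decide (d.toProd.2 - d.toProd.1 = (a₂ : ZMod n) ∨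
        d.toProd.1 - d.toProd.2 = (a₂ : ZMod n))) := by
  have : Fact (1 < Nat.gcd n a₁) := ⟨hg₁⟩
  let φ := ZMod.castHom (Nat.gcd_dvd_left n a₁) (ZMod (Nat.gcd n a₁))
  have hφa₁ : φ a₁ = 0 := by
    rw [map_natCast, ZMod.natCast_eq_zero_iff]
    exact Nat.gcd_dvd_right n a₁
  calc Nat.gcd n a₁ = Fintype.card (ZMod (Nat.gcd n a₁)) := (ZMod.card _).symm
    _ ≤ w.darts.countP (fun d => φ d.fst ≠ φ d.snd) :=
        w.card_le_countP_darts_map_ne (ZMod.castHom_surjective _) hw.mem_support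
    _ ≤ _ := List.countP_mono_left fun d _ hd => by
        simpa using SimpleGraph.circulantGraph_pair_sub_eq_of_map_ne φ.toAddMonoidHom hφa₁ d.adj
          (by simpa using hd)

/-- Lower bound for two-stripe circulant TSP: in a (nontrivial) two-stripe instance with
`gcd(n,a₁,a₂) = 1` and `g₁ = gcd(n,a₁) > 1`, every Hamiltonian cycle in `C⟨{a₁,a₂}⟩` uses
at least `g₁` edges of length `a₂`. -/
theorem stmt_5 (n a₁ a₂ : ℕ) (hn : 0 < n)
    (ha₁ : 1 ≤ a₁) (ha₂ : 1 ≤ a₂) (hne : a₁ ≠ a₂)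
    (hb₁ : 2 * a₁ ≤ n) (hb₂ : 2 * a₂ ≤ n)
    (hg : Nat.gcd (Nat.gcd n a₁) a₂ = 1) (hg₁ : 1 < Nat.gcd n a₁)
    (v : ZMod n)
    (w : (SimpleGraph.circulantGraph
        ({(a₁ : ZMod n), (a₂ : ZMod n)} : Set (ZMod n))).Walk v v)
    (hw : w.IsHamiltonianCycle) :
    Nat.gcd n a₁ ≤
      w.darts.countP (fun d => decide (d.toProd.2 - d.toProd.1 = (a₂ : ZMod n) ∨
        d.toProd.1 - d.toProd.2 = (a₂ : ZMod n))) :=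
  stmt_5_general n a₁ a₂ hg₁ v w hw
end

section
/- Orient a Hamiltonian cycle in C⟨{a₁, a₂}⟩ arbitrarily and let a₊ and a₋ denote the number of edges traversed in the +a₂ direction and −a₂ direction, respectively. Then a₊ − a₋ ≡ 0 (mod g₁), where g₁ = gcd(n, a₁). -/
lemma walk_sum {α : Type*} [AddCommGroup α] {G : SimpleGraph α} {u v : α} (w : G.Walk u v) :
    (w.darts.map fun d => d.toProd.2 - d.toProd.1).sum = v - u := by
  induction w with
  | nil => simp
  | cons h p ih => simp [SimpleGraph.Walk.darts_cons, ih]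

lemma countP_sum {α R : Type*} [AddCommMonoidWithOne R] (l : List α) (p : α → Bool) :
    (l.map fun d => if p d then (1 : R) else 0).sum = (l.countP p : R) := by
  induction l with
  | nil => simp
  | cons a l ih =>
    by_cases h : p a <;> simp [List.countP_cons, h, ih, add_comm]

lemma sum_map_sub {α R : Type*} [AddCommGroup R] (l : List α) (f g : α → R) :
    (l.map fun d => f d - g d).sum = (l.map f).sum - (l.map g).sum := by
  induction l with
  | nil => simp
  | cons a l ih => simp [ih]; abel

/-- Orient a Hamiltonian cycle in `C⟨{a₁,a₂}⟩` arbitrarily, and let `a₊` (resp. `a₋`) be the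
number of darts traversed in the `+a₂` (resp. `−a₂`) direction. Then
`a₊ − a₋ ≡ 0 (mod g₁)` where `g₁ = gcd(n,a₁)`. -/
theorem stmt_6 (n a₁ a₂ : ℕ) (hn : 0 < n)
    (ha₁ : 1 ≤ a₁) (ha₂ : 1 ≤ a₂) (hne : a₁ ≠ a₂)
    (hb₁ : 2 * a₁ ≤ n) (hb₂ : 2 * a₂ ≤ n)
    (hg : Nat.gcd (Nat.gcd n a₁) a₂ = 1)
    (v : ZMod n)
    (w : (SimpleGraph.circulantGraph
        ({(a₁ : ZMod n), (a₂ : ZMod n)} : Set (ZMod n))).Walk v v)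
    (hw : w.IsHamiltonianCycle) :
    ((w.darts.countP fun d => decide (d.toProd.2 - d.toProd.1 = (a₂ : ZMod n))) : ℤ) -
      ((w.darts.countP fun d => decide (d.toProd.1 - d.toProd.2 = (a₂ : ZMod n))) : ℤ)
      ≡ 0 [ZMOD (Nat.gcd n a₁ : ℤ)] := by
  haveI : NeZero n := ⟨hn.ne'⟩
  set g := Nat.gcd n a₁ with hgdef
  haveI : NeZero g := ⟨(Nat.gcd_pos_of_pos_left a₁ hn).ne'⟩
  have ha₁n : a₁ < n := lt_of_lt_of_le (by omega) hb₁
  have ha₂n : a₂ < n := lt_of_lt_of_le (by omega) hb₂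
  by_cases hhalf : 2 * a₂ = n
  · -- a₂ = -a₂ in ZMod n, so the two counts coincide
    have hneg : (a₂ : ZMod n) = -(a₂ : ZMod n) := by
      have : ((2 * a₂ : ℕ) : ZMod n) = 0 := by rw [hhalf]; exact ZMod.natCast_self n
      push_cast at this
      linear_combination this
    have hpred : (fun d : (SimpleGraph.circulantGraph
        ({(a₁ : ZMod n), (a₂ : ZMod n)} : Set (ZMod n))).Dart =>
          decide (d.toProd.1 - d.toProd.2 = (a₂ : ZMod n)))
        = fun d => decide (d.toProd.2 - d.toProd.1 = (a₂ : ZMod n)) := by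
      funext d
      rw [decide_eq_decide]
      constructor
      · intro h; linear_combination -h - hneg
      · intro h; linear_combination -h - hneg
    rw [hpred, sub_self]
  · -- 2 * a₂ < n
    have hhalf' : 2 * a₂ < n := lt_of_le_of_ne hb₂ hhalf
    -- key inequalities in ZMod n
    have hF1 : (a₂ : ZMod n) ≠ -(a₂ : ZMod n) := by
      intro h
      have h2 : ((2 * a₂ : ℕ) : ZMod n) = 0 := by push_cast; linear_combination h
      rw [ZMod.natCast_eq_zero_iff] at h2
      have := Nat.le_of_dvd (by omega) h2
      omega
    have hsum : ∀ x y : ℕ, 2 * x ≤ n → 2 * y ≤ n → 1 ≤ x → 1 ≤ y → x ≠ y →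
        (x : ZMod n) ≠ -(y : ZMod n) := by
      intro x y hx hy hx1 hy1 hxy h
      have h2 : ((x + y : ℕ) : ZMod n) = 0 := by push_cast; linear_combination h
      rw [ZMod.natCast_eq_zero_iff] at h2
      have := Nat.le_of_dvd (by omega) h2
      omega
    have hF2a : (a₁ : ZMod n) ≠ (a₂ : ZMod n) := by
      intro h
      rw [ZMod.natCast_eq_natCast_iff] at h
      have h' : a₁ % n = a₂ % n := h
      rw [Nat.mod_eq_of_lt ha₁n, Nat.mod_eq_of_lt ha₂n] at h'
      exact hne h'
    have hF2b : (a₁ : ZMod n) ≠ -(a₂ : ZMod n) := hsum a₁ a₂ hb₁ hb₂ ha₁ ha₂ hne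
    -- the cast ring hom
    let f : ZMod n →+* ZMod g := ZMod.castHom (Nat.gcd_dvd_left n a₁) (ZMod g)
    have hfa₁' : ((a₁ : ZMod g)) = 0 := by
      rw [ZMod.natCast_eq_zero_iff]
      exact Nat.gcd_dvd_right n a₁
    -- per-dart identity
    have hdart : ∀ d ∈ w.darts,
        f (d.toProd.2 - d.toProd.1)
          = (if (decide (d.toProd.2 - d.toProd.1 = (a₂ : ZMod n)) : Bool) then (a₂ : ZMod g) else 0)
            - (if (decide (d.toProd.1 - d.toProd.2 = (a₂ : ZMod n)) : Bool) then (a₂ : ZMod g) else 0) := by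
      intro d _
      have hadj := d.adj
      unfold SimpleGraph.circulantGraph at hadj
      rw [SimpleGraph.fromRel_adj] at hadj
      obtain ⟨-, hmem⟩ := hadj
      set δ : ZMod n := d.toProd.2 - d.toProd.1 with hδ
      have hPm : (d.toProd.1 - d.toProd.2 = (a₂ : ZMod n)) ↔ δ = -(a₂ : ZMod n) := by
        constructor
        · intro h; rw [hδ]; linear_combination -h
        · intro h; linear_combination -h
      have hcases : δ = (a₁ : ZMod n) ∨ δ = (a₂ : ZMod n)
          ∨ δ = -(a₁ : ZMod n) ∨ δ = -(a₂ : ZMod n) := by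
        rcases hmem with h | h <;>
          rcases Set.mem_insert_iff.mp h with h' | h'
        · right; right; left; linear_combination -h'
        · right; right; right; linear_combination -(Set.mem_singleton_iff.mp h')
        · left; linear_combination h'
        · right; left; linear_combination Set.mem_singleton_iff.mp h'
      rcases hcases with h | h | h | h
      · have c1 : ¬ (δ = (a₂ : ZMod n)) := by rw [h]; exact hF2a
        have c2 : ¬ (d.toProd.1 - d.toProd.2 = (a₂ : ZMod n)) := by
          intro hc
          have := hPm.mp hc
          rw [h] at this
          exact hF2b this
        rw [if_neg (by simpa using c1), if_neg (by simpa using c2), h, map_natCast, hfa₁']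
        ring
      · have c2 : ¬ (d.toProd.1 - d.toProd.2 = (a₂ : ZMod n)) := by
          intro hc
          have := hPm.mp hc
          rw [h] at this
          exact hF1 this
        rw [if_pos (by simpa using h), if_neg (by simpa using c2), h, map_natCast]
        ring
      · have c1 : ¬ (δ = (a₂ : ZMod n)) := by
          rw [h]
          intro hc
          exact hsum a₂ a₁ hb₂ hb₁ ha₂ ha₁ (Ne.symm hne) hc.symm
        have c2 : ¬ (d.toProd.1 - d.toProd.2 = (a₂ : ZMod n)) := by
          intro hc
          have := hPm.mp hc
          rw [h] at this
          exact hF2a (neg_injective this)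
        rw [if_neg (by simpa using c1), if_neg (by simpa using c2), h, map_neg, map_natCast, hfa₁']
        ring
      · have c1 : ¬ (δ = (a₂ : ZMod n)) := by
          rw [h]
          intro hc
          exact hF1 hc.symm
        rw [if_neg (by simpa using c1), if_pos (by simpa using hPm.mpr h), h, map_neg, map_natCast]
        ring
    -- sum the identity
    have hsum0 : (w.darts.map fun d => f (d.toProd.2 - d.toProd.1)).sum = 0 := by
      have hmm : (w.darts.map fun d => f (d.toProd.2 - d.toProd.1))
          = (w.darts.map fun d => d.toProd.2 - d.toProd.1).map f := by
        rw [List.map_map]; rfl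
      rw [hmm, ← map_list_sum, walk_sum, sub_self, map_zero]
    rw [List.map_congr_left hdart] at hsum0
    rw [sum_map_sub] at hsum0
    have hrw : ∀ p : _ → Bool, ((w.darts.map fun d => if p d then (a₂ : ZMod g) else 0).sum)
        = (w.darts.countP p : ZMod g) * (a₂ : ZMod g) := by
      intro p
      rw [← countP_sum w.darts p, ← List.sum_map_mul_right]
      exact congrArg List.sum (List.map_congr_left fun d _ => by by_cases h : p d <;> simp [h])
    rw [hrw, hrw, ← sub_mul] at hsum0
    -- a₂ is a unit mod g
    have hunit : IsUnit ((a₂ : ZMod g)) := by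
      rw [ZMod.isUnit_iff_coprime]
      exact Nat.coprime_comm.mp hg
    have hzero : ((w.darts.countP fun d => decide (d.toProd.2 - d.toProd.1 = (a₂ : ZMod n))) : ZMod g)
        - ((w.darts.countP fun d => decide (d.toProd.1 - d.toProd.2 = (a₂ : ZMod n))) : ZMod g) = 0 := by
      exact (IsUnit.mul_left_eq_zero hunit).mp hsum0
    have hz2 : ((((w.darts.countP fun d => decide (d.toProd.2 - d.toProd.1 = (a₂ : ZMod n))) : ℤ) -
        ((w.darts.countP fun d => decide (d.toProd.1 - d.toProd.2 = (a₂ : ZMod n))) : ℤ) : ℤ) : ZMod g) = 0 := by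
      push_cast
      exact_mod_cast hzero
    rw [ZMod.intCast_zmod_eq_zero_iff_dvd] at hz2
    exact Int.modEq_zero_iff_dvd.mpr hz2
end

section
/- For r, c ≥ 2, if x ∈ A_{r,c,m}, then both x and x + 2 belong to A_{r+2,c,m+1} (interpreted modulo r + 2). -/
/-- The set `A_{r,c,m} = {(c + 2m − 2i) mod r : 0 ≤ i ≤ c + 2m}` of rows reachable by GG paths. -/
def ggReachable (r c m : ℕ) : Set (ZMod r) :=
  {x | ∃ i : ℕ, i ≤ c + 2 * m ∧ x = (((c : ℤ) + 2 * m - 2 * i : ℤ) : ZMod r)}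

/-- For `r, c ≥ 2`: if a row index `x` (with `0 ≤ x < r`) lies in `A_{r,c,m}`, then both `x`
and `x + 2`, interpreted modulo `r + 2`, lie in `A_{r+2,c,m+1}`. -/
theorem stmt_12 (r c m : ℕ) (hr : 2 ≤ r) (hc : 2 ≤ c) (x : ℕ) (hx : x < r)
    (hmem : (x : ZMod r) ∈ ggReachable r c m) :
    ((x : ZMod (r + 2)) ∈ ggReachable (r + 2) c (m + 1)) ∧
    (((x + 2 : ℕ) : ZMod (r + 2)) ∈ ggReachable (r + 2) c (m + 1)) := by
  obtain ⟨i, hi, hxe⟩ := hmem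
  have h2 : ((x : ℤ)) ≡ ((c : ℤ) + 2 * m - 2 * i) [ZMOD (r : ℕ)] :=
    (ZMod.intCast_eq_intCast_iff _ _ _).mp (by exact_mod_cast hxe)
  obtain ⟨k, hk⟩ := h2.dvd
  -- hk : (c + 2m - 2i) - x = r * k
  have hiZ : (i : ℤ) ≤ (c : ℤ) + 2 * m := by exact_mod_cast hi
  have hxZ : (x : ℤ) < r := by exact_mod_cast hx
  have hi0 : (0 : ℤ) ≤ (i : ℤ) := Int.natCast_nonneg i
  have hx0 : (0 : ℤ) ≤ (x : ℤ) := Int.natCast_nonneg x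
  have hr0 : (0 : ℤ) ≤ (r : ℤ) := Int.natCast_nonneg r
  have key : ((x : ℤ) ≤ (c : ℤ) + 2 * m ∧ (2 : ℤ) ∣ ((c : ℤ) + 2 * m - x)) ∨
      ((r : ℤ) - x ≤ (c : ℤ) + 2 * m ∧ (2 : ℤ) ∣ ((c : ℤ) + 2 * m + r - x)) := by
    rcases Int.even_or_odd k with ⟨t, ht⟩ | ⟨t, ht⟩
    · left
      refine ⟨?_, ⟨i + r * t, by linear_combination hk + (r : ℤ) * ht⟩⟩
      rcases le_or_gt 0 k with h | h
      · nlinarith [mul_nonneg hr0 h]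
      · have hk2 : k ≤ -2 := by omega
        nlinarith [mul_le_mul_of_nonneg_left hk2 hr0]
    · right
      refine ⟨?_, ⟨i + r * t + r, by linear_combination hk + (r : ℤ) * ht⟩⟩
      rcases le_or_gt 1 k with h | h
      · nlinarith [mul_le_mul_of_nonneg_left h hr0]
      · have hk2 : k ≤ -1 := by omega
        nlinarith [mul_le_mul_of_nonneg_left hk2 hr0]
  have hcast0 : ((r : ℕ) : ZMod (r + 2)) + 2 = 0 := by
    have := ZMod.natCast_self (r + 2)
    push_cast at this
    exact this
  rcases key with ⟨hle, hdvd⟩ | ⟨hle, hdvd⟩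
  · -- x ≤ c + 2m, same parity as c
    constructor
    · refine ⟨(c + 2 * m + 2 - x) / 2, by omega, ?_⟩
      have he : (c : ℤ) + 2 * (m + 1 : ℕ) - 2 * ((c + 2 * m + 2 - x) / 2 : ℕ) = (x : ℤ) := by
        push_cast
        omega
      rw [he]
      exact (Int.cast_natCast x).symm
    · refine ⟨(c + 2 * m - x) / 2, by omega, ?_⟩
      have he : (c : ℤ) + 2 * (m + 1 : ℕ) - 2 * ((c + 2 * m - x) / 2 : ℕ) = ((x + 2 : ℕ) : ℤ) := by
        push_cast
        omega
      rw [he]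
      exact (Int.cast_natCast (x + 2)).symm
  · -- r - x ≤ c + 2m, x - r same parity as c
    constructor
    · refine ⟨(c + 2 * m + 4 + r - x) / 2, by omega, ?_⟩
      have he : (c : ℤ) + 2 * (m + 1 : ℕ) - 2 * ((c + 2 * m + 4 + r - x) / 2 : ℕ)
          = (x : ℤ) - ((r : ℤ) + 2) := by
        push_cast
        omega
      rw [he]
      push_cast
      rw [hcast0]
      ring
    · refine ⟨(c + 2 * m + 2 + r - x) / 2, by omega, ?_⟩
      have he : (c : ℤ) + 2 * (m + 1 : ℕ) - 2 * ((c + 2 * m + 2 + r - x) / 2 : ℕ)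
          = ((x + 2 : ℕ) : ℤ) - ((r : ℤ) + 2) := by
        push_cast
        omega
      rw [he]
      push_cast
      rw [hcast0]
      ring
end

section
/- Let P be an s-t path and C a cycle in a graph G such that P and C are vertex-disjoint and together cover all vertices of G. Let p₁p₂ be an edge of P and q₁q₂ an edge of C such that p₁q₁ and p₂q₂ are edges of G. Then (P ∪ C) − {p₁p₂, q₁q₂} + {p₁q₁, p₂q₂} is an s-t Hamiltonian path in G. -/
/-!
Cut `P` at `p₁p₂` into an `s`-`p₁` path `P₁` and a `p₂`-`t` path `P₂`, and open `C` at `q₁q₂`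
into a `q₁`-`q₂` path `D` through all of its vertices. The walk `P₁, p₁q₁, D, q₂p₂, P₂` visits
the vertices of `P` and of `D`, each once, since `P` and `C` are disjoint; as they cover `G`,
it is a Hamiltonian path.
-/

open SimpleGraph

lemma Multiset.exchange_pair {α : Type*} [DecidableEq α] (A B D : Multiset α) (e₁ e₂ f₁ f₂ : α) :
    A + e₁ ::ₘ B + e₂ ::ₘ D - {e₁, e₂} + {f₁, f₂} = A + f₁ ::ₘ (D + f₂ ::ₘ B) := by
  have : A + e₁ ::ₘ B + e₂ ::ₘ D = {e₁, e₂} + (A + B + D) := by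
    simp only [Multiset.insert_eq_cons, ← Multiset.singleton_add]; abel
  rw [this, add_tsub_cancel_left]
  simp only [Multiset.insert_eq_cons, ← Multiset.singleton_add]; abel

namespace SimpleGraph.Walk

variable {V : Type*} {G : SimpleGraph V}

lemma exists_eq_append_cons_of_mem_darts {u v a b : V} {p : G.Walk u v} {h : G.Adj a b}
    (hd : ⟨(a, b), h⟩ ∈ p.darts) :
    ∃ (p₁ : G.Walk u a) (p₂ : G.Walk b v), p = p₁.append (cons h p₂) := by
  obtain ⟨p₁, p₂, rfl⟩ := (isSubwalk_toWalk_iff_mem_darts p h).mpr hd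
  exact ⟨p₁, p₂, by rw [← append_assoc]; rfl⟩

lemma exists_mem_darts_of_mem_edges {u v a b : V} {p : G.Walk u v} (he : s(a, b) ∈ p.edges) :
    (∃ h : G.Adj a b, ⟨(a, b), h⟩ ∈ p.darts) ∨ ∃ h : G.Adj b a, ⟨(b, a), h⟩ ∈ p.darts := by
  obtain ⟨⟨⟨x, y⟩, h⟩, hd, hxy⟩ := List.mem_map.mp he
  rcases dart_edge_eq_mk'_iff.mp hxy with hxy | hxy <;> obtain ⟨rfl, rfl⟩ := Prod.mk.inj hxy
  exacts [Or.inl ⟨h, hd⟩, Or.inr ⟨h, hd⟩]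

lemma IsCycle.exists_isPath_of_mem_darts {u a b : V} {c : G.Walk u u} (hc : c.IsCycle)
    {h : G.Adj a b} (hd : ⟨(a, b), h⟩ ∈ c.darts) :
    ∃ q : G.Walk b a, q.IsPath ∧ (∀ v, v ∈ q.support ↔ v ∈ c.support) ∧
      (c.edges : Multiset (Sym2 V)) = s(a, b) ::ₘ q.edges := by
  obtain ⟨c₁, c₂, rfl⟩ := exists_eq_append_cons_of_mem_darts hd
  have htail := hc.support_nodup
  rw [tail_support_append, support_cons, List.tail_cons] at htail
  refine ⟨c₂.append c₁, ?_, fun v => ?_, ?_⟩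
  · rw [isPath_def, support_append]
    exact List.nodup_append_comm.mp htail
  · simp only [mem_support_append_iff, support_cons, List.mem_cons]
    grind [end_mem_support]
  · rw [edges_append, edges_append, edges_cons, Multiset.cons_coe, Multiset.coe_eq_coe]
    exact List.perm_middle.trans (List.perm_append_comm.cons _)

lemma IsCycle.exists_isPath_of_mem_edges {u a b : V} {c : G.Walk u u} (hc : c.IsCycle)
    (he : s(a, b) ∈ c.edges) :
    ∃ q : G.Walk a b, q.IsPath ∧ (∀ v, v ∈ q.support ↔ v ∈ c.support) ∧
      (c.edges : Multiset (Sym2 V)) = s(a, b) ::ₘ q.edges := by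
  rcases exists_mem_darts_of_mem_edges he with ⟨h, hd⟩ | ⟨h, hd⟩
  · obtain ⟨q, hq, hsupp, hedges⟩ := hc.exists_isPath_of_mem_darts hd
    refine ⟨q.reverse, hq.reverse, fun v => ?_, ?_⟩
    · rw [support_reverse, List.mem_reverse, hsupp]
    · rw [hedges, edges_reverse, Multiset.coe_reverse]
  · obtain ⟨q, hq, hsupp, hedges⟩ := hc.exists_isPath_of_mem_darts hd
    exact ⟨q, hq, hsupp, Sym2.eq_swap ▸ hedges⟩

theorem exists_isHamiltonian_of_exchange [DecidableEq V] {s t u p₁ p₂ q₁ q₂ : V}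
    {P : G.Walk s t} (hP : P.IsPath) {C : G.Walk u u} (hC : C.IsCycle)
    (hdisj : ∀ v ∈ P.support, v ∉ C.support) (hcover : ∀ v, v ∈ P.support ∨ v ∈ C.support)
    {h : G.Adj p₁ p₂} (hp : ⟨(p₁, p₂), h⟩ ∈ P.darts) (hq : s(q₁, q₂) ∈ C.edges)
    (ha₁ : G.Adj p₁ q₁) (ha₂ : G.Adj p₂ q₂) :
    ∃ Q : G.Walk s t, Q.IsHamiltonian ∧
      (Q.edges : Multiset (Sym2 V)) =
        P.edges + C.edges - {s(p₁, p₂), s(q₁, q₂)} + {s(p₁, q₁), s(p₂, q₂)} := by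
  obtain ⟨P₁, P₂, rfl⟩ := exists_eq_append_cons_of_mem_darts hp
  obtain ⟨D, hD, hDsupp, hDedges⟩ := hC.exists_isPath_of_mem_edges hq
  let Q := P₁.append (cons ha₁ (D.append (cons ha₂.symm P₂)))
  have hsupp : Q.support.Perm ((P₁.append (cons h P₂)).support ++ D.support) := by
    simp only [Q, support_append, support_cons, List.tail_cons, List.append_assoc]
    exact List.perm_append_comm.append_left _
  refine ⟨Q, IsPath.isHamiltonian_of_mem ?_ fun v => ?_, ?_⟩
  · refine .mk' <| hsupp.nodup_iff.mpr <|
      List.nodup_append.mpr ⟨hP.support_nodup, hD.support_nodup, ?_⟩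
    rintro v hvP _ hvD rfl
    exact hdisj v hvP ((hDsupp v).mp hvD)
  · rw [hsupp.mem_iff, List.mem_append, hDsupp]
    exact hcover v
  · simp only [Q, edges_append, edges_cons, hDedges, ← Multiset.coe_add, ← Multiset.cons_coe,
      Sym2.eq_swap (a := q₂)]
    exact (Multiset.exchange_pair _ _ _ _ _ _ _).symm

end SimpleGraph.Walk

/-- Reconnection claim: let `P` be an `s`-`t` path and `C` a cycle, vertex-disjoint and
together covering all vertices of `G`. If `p₁p₂` is an edge of `P`, `q₁q₂` an edge of `C`,
and `p₁q₁`, `p₂q₂` are edges of `G`, then `(P ∪ C) − {p₁p₂, q₁q₂} + {p₁q₁, p₂q₂}` is an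
`s`-`t` Hamiltonian path in `G`. -/
theorem stmt_15 {V : Type*} [DecidableEq V] (G : SimpleGraph V) (s t u : V)
    (P : G.Walk s t) (hP : P.IsPath)
    (C : G.Walk u u) (hC : C.IsCycle)
    (hdisj : ∀ v : V, v ∈ P.support → v ∉ C.support)
    (hcover : ∀ v : V, v ∈ P.support ∨ v ∈ C.support)
    (p₁ p₂ q₁ q₂ : V)
    (hp : s(p₁, p₂) ∈ P.edges) (hq : s(q₁, q₂) ∈ C.edges)
    (ha₁ : G.Adj p₁ q₁) (ha₂ : G.Adj p₂ q₂) :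
    ∃ Q : G.Walk s t, Q.IsHamiltonian ∧
      (Q.edges : Multiset (Sym2 V)) =
        (((P.edges : Multiset (Sym2 V)) + (C.edges : Multiset (Sym2 V))) -
          {s(p₁, p₂), s(q₁, q₂)}) + {s(p₁, q₁), s(p₂, q₂)} := by
  rcases Walk.exists_mem_darts_of_mem_edges hp with ⟨h, hd⟩ | ⟨h, hd⟩
  · exact Walk.exists_isHamiltonian_of_exchange hP hC hdisj hcover hd hq ha₁ ha₂
  · obtain ⟨Q, hQ, hedges⟩ := Walk.exists_isHamiltonian_of_exchange hP hC hdisj hcover hd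
      (Sym2.eq_swap ▸ hq) ha₂ ha₁
    refine ⟨Q, hQ, ?_⟩
    rw [hedges, Sym2.eq_swap (a := p₂), Sym2.eq_swap (a := q₂), Multiset.pair_comm s(p₂, q₂)]
end

section
/- Consider an r × c cylinder graph with r, c ≥ 2. Any Hamiltonian path starting at (0,0), ending in the last column, and using at most (c − 1) + 2m horizontal edges must end at a vertex (x, c−1) with x ∈ A_{r,c,m} = {(c + 2m − 2i) mod r : 0 ≤ i ≤ c + 2m}. -/
/-! The cut between rows `k` and `k + 1` of the cylinder has `c` edges, so a Hamiltonian path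
crosses it at most `c` times, and by flow conservation its net number of upward crossings is
`N + [k < x]` for a constant `N`. A crossing number has the parity of the net number, so each cut
whose net number has the parity opposite to `c` leaves at least one of its edges unused. The path
uses `r c - 1` edges, `H ≤ c - 1 + 2m` of them horizontal with `H ≡ c - 1 (mod 2)` (count the
column changes), so exactly `H + 1` cut edges are unused. If `N ≡ c`, the `x` cuts below the
endpoint each leave an edge unused, so `x ≤ H + 1`; otherwise the `r - x` cuts above it do, so
`r - x ≤ H + 1`. In both cases `x` or `x - r` is a representative of the endpoint's row of
absolute value at most `c + 2m` and of the parity of `c`. -/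

/-- The `r × c` cylinder graph: vertices `(i, j)` with row `i : ZMod r` and column
`j : Fin c`; vertical edges `(i,j)–(i+1 mod r, j)` and horizontal edges `(i,j)–(i,j+1)`. -/
def cylGraph (r c : ℕ) : SimpleGraph (ZMod r × Fin c) :=
  SimpleGraph.fromRel (fun u v =>
    (u.2 = v.2 ∧ v.1 = u.1 + 1) ∨ (u.1 = v.1 ∧ (v.2 : ℕ) = (u.2 : ℕ) + 1))

open Finset SimpleGraph

theorem Finset.card_nsmul_le_sum_and_sum_modEq {ι : Type*} {s : Finset ι} {e : ι → ℤ} {a n : ℤ}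
    (h : ∀ i ∈ s, a ≤ e i ∧ e i ≡ a [ZMOD n]) :
    #s • a ≤ ∑ i ∈ s, e i ∧ ∑ i ∈ s, e i ≡ #s • a [ZMOD n] := by
  refine ⟨card_nsmul_le_sum s e a fun i hi => (h i hi).1, ?_⟩
  rw [← sum_const]
  exact Int.ModEq.sum fun i hi => (h i hi).2

theorem Int.exists_eq_sub_two_mul {y n : ℤ} (hy : |y| ≤ n) (hyn : y ≡ n [ZMOD 2]) :
    ∃ i : ℕ, (i : ℤ) ≤ n ∧ y = n - 2 * i := by
  rw [abs_le] at hy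
  unfold Int.ModEq at hyn
  exact ⟨((n - y) / 2).toNat, by omega, by omega⟩

/-- In the application `t h` is the number of crossings of the cut above row `h` and `ρ` the row
of the endpoint, so that the sum counts the unused cut edges. -/
theorem exists_modEq_abs_le_sum_sub {r c ρ : ℕ} {N : ℤ} {t : ℕ → ℕ} (hρ : ρ ≤ r)
    (ht : ∀ h < r, t h ≤ c) (htN : ∀ h < r, (t h : ℤ) ≡ N + if h < ρ then 1 else 0 [ZMOD 2]) :
    ∃ y : ℤ, y ≡ ρ [ZMOD r] ∧ |y| ≤ ∑ h ∈ range r, ((c : ℤ) - t h) ∧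
      y ≡ ∑ h ∈ range r, ((c : ℤ) - t h) [ZMOD 2] := by
  have hlow (h : ℕ) (hh : h ∈ range ρ) :
      ((c : ℤ) - N + 1) % 2 ≤ c - t h ∧ (c : ℤ) - t h ≡ ((c : ℤ) - N + 1) % 2 [ZMOD 2] := by
    rw [mem_range] at hh
    have := ht h (by omega)
    have := htN h (by omega)
    rw [if_pos hh] at this
    unfold Int.ModEq at *
    omega
  have hhigh (h : ℕ) (hh : h ∈ Ico ρ r) :
      ((c : ℤ) - N) % 2 ≤ c - t h ∧ (c : ℤ) - t h ≡ ((c : ℤ) - N) % 2 [ZMOD 2] := by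
    rw [mem_Ico] at hh
    have := ht h hh.2
    have := htN h hh.2
    rw [if_neg (by omega)] at this
    unfold Int.ModEq at *
    omega
  obtain ⟨hA, hA2⟩ := card_nsmul_le_sum_and_sum_modEq hlow
  obtain ⟨hB, hB2⟩ := card_nsmul_le_sum_and_sum_modEq hhigh
  rw [card_range, nsmul_eq_mul] at hA hA2
  rw [Nat.card_Ico, nsmul_eq_mul, Nat.cast_sub hρ] at hB hB2
  rw [← sum_range_add_sum_Ico _ hρ]
  rcases Int.emod_two_eq_zero_or_one ((c : ℤ) - N) with hcN | hcN
  · rw [show ((c : ℤ) - N + 1) % 2 = 1 by omega, mul_one] at hA hA2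
    rw [hcN, mul_zero] at hB hB2
    refine ⟨ρ, rfl, ?_, ?_⟩
    · rw [abs_of_nonneg (by positivity)]
      linarith
    · exact (hA2.add hB2).symm
  · rw [show ((c : ℤ) - N + 1) % 2 = 0 by omega, mul_zero] at hA hA2
    rw [hcN, mul_one] at hB hB2
    refine ⟨ρ - r, by simp [Int.ModEq], ?_, ?_⟩
    · rw [abs_of_nonpos (by omega)]
      linarith
    · unfold Int.ModEq at *
      omega

theorem SimpleGraph.Walk.IsTrail.countP_darts_edge_mem_le {V : Type*} {G : SimpleGraph V}
    [DecidableEq V] {u v : V} {p : G.Walk u v} (hp : p.IsTrail) (s : Finset (Sym2 V)) :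
    p.darts.countP (fun d => d.edge ∈ s) ≤ #s := by
  have hnodup := hp.edges_nodup.filter (fun e => e ∈ s)
  have hcount : p.darts.countP (fun d => d.edge ∈ s) = p.edges.countP (· ∈ s) := by
    rw [Walk.edges, List.countP_map]
    rfl
  rw [hcount, List.countP_eq_length_filter, ← List.toFinset_card_of_nodup hnodup]
  exact card_le_card fun e he => of_decide_eq_true (List.mem_filter.1 (List.mem_toFinset.1 he)).2

theorem Finset.sum_countP_eq_countP {ι α : Type*} (s : Finset ι) (p : ι → α → Bool)
    (q : α → Bool) (l : List α) (hpq : ∀ a ∈ l, #{i ∈ s | p i a} = if q a then 1 else 0) :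
    ∑ i ∈ s, l.countP (p i) = l.countP q := by
  induction l with
  | nil => simp
  | cons a l ih =>
    simp only [List.countP_cons, sum_add_distrib, ← card_filter]
    rw [ih fun b hb => hpq b (List.mem_cons_of_mem a hb), hpq a List.mem_cons_self]

theorem ZMod.eq_natCast_iff_val_eq {r : ℕ} [NeZero r] {a : ZMod r} {n : ℕ} (hn : n < r) :
    a = n ↔ a.val = n := by
  constructor
  · rintro rfl
    exact ZMod.val_cast_of_lt hn
  · intro h
    rw [← h, ZMod.natCast_zmod_val]

theorem ZMod.card_filter_range_eq_natCast {r : ℕ} [NeZero r] (a : ZMod r) :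
    #{h ∈ range r | a = ((h : ℕ) : ZMod r)} = 1 := by
  rw [card_eq_one]
  refine ⟨a.val, ?_⟩
  ext h
  simp only [mem_filter, mem_range, mem_singleton]
  constructor
  · rintro ⟨hh, ha⟩
    exact ((ZMod.eq_natCast_iff_val_eq hh).1 ha).symm
  · rintro rfl
    exact ⟨ZMod.val_lt a, (ZMod.natCast_zmod_val a).symm⟩

theorem List.countP_ne_zero_modEq_sum (l : List ℤ) (hl : ∀ a ∈ l, |a| ≤ 1) :
    (l.countP (· ≠ 0) : ℤ) ≡ l.sum [ZMOD 2] := by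
  induction l with
  | nil => rfl
  | cons a l ih =>
    have ha := abs_le.1 (hl a List.mem_cons_self)
    have := ih fun b hb => hl b (List.mem_cons_of_mem a hb)
    unfold Int.ModEq at *
    rw [List.countP_cons, List.sum_cons]
    split_ifs with ha0 <;> rw [decide_eq_true_eq] at ha0 <;> push_cast <;> omega

namespace cylGraph

variable {r c : ℕ}

theorem adj_cases {u v : ZMod r × Fin c} (h : (cylGraph r c).Adj u v) :
    (u.2 = v.2 ∧ (v.1 = u.1 + 1 ∨ u.1 = v.1 + 1)) ∨
      (u.1 = v.1 ∧ ((v.2 : ℕ) = u.2 + 1 ∨ (u.2 : ℕ) = v.2 + 1)) := by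
  rw [cylGraph, fromRel_adj] at h
  grind

theorem col_eq_of_row_ne {u v : ZMod r × Fin c} (h : (cylGraph r c).Adj u v) (hne : u.1 ≠ v.1) :
    u.2 = v.2 := by
  rcases adj_cases h with ⟨hcol, -⟩ | ⟨hrow, -⟩
  exacts [hcol, absurd hrow hne]

theorem row_eq_of_adj {u v : ZMod r × Fin c} (h : (cylGraph r c).Adj u v)
    (hup : v.1 ≠ u.1 + 1) (hdown : u.1 ≠ v.1 + 1) : u.1 = v.1 := by
  rcases adj_cases h with ⟨-, h | h⟩ | ⟨h, -⟩
  exacts [absurd h hup, absurd h hdown, h]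

/-- The sign with which the dart `d` crosses the cut between rows `k` and `k + 1`. For `r = 2` a
vertical dart satisfies both row equations; the first test makes it an upward crossing only. -/
def crossSign (k : ZMod r) (d : (cylGraph r c).Dart) : ℤ :=
  if d.snd.1 = d.fst.1 + 1 then (if d.fst.1 = k then 1 else 0)
  else if d.fst.1 = d.snd.1 + 1 then (if d.snd.1 = k then -1 else 0) else 0

def netFlow {u v : ZMod r × Fin c} (p : (cylGraph r c).Walk u v) (k : ZMod r) : ℤ :=
  (p.darts.map (crossSign k)).sum

def crossings {u v : ZMod r × Fin c} (p : (cylGraph r c).Walk u v) (k : ZMod r) : ℕ :=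
  p.darts.countP (fun d => crossSign k d ≠ 0)

def cutEdges (k : ZMod r) : Finset (Sym2 (ZMod r × Fin c)) :=
  univ.image fun j => s((k, j), (k + 1, j))

theorem abs_crossSign_le (k : ZMod r) (d : (cylGraph r c).Dart) : |crossSign k d| ≤ 1 := by
  unfold crossSign
  split_ifs <;> simp

theorem crossSign_sub_one_sub (k : ZMod r) (d : (cylGraph r c).Dart) :
    crossSign (k - 1) d - crossSign k d =
      (if d.snd.1 = k then 1 else 0) - (if d.fst.1 = k then 1 else 0) := by
  by_cases hup : d.snd.1 = d.fst.1 + 1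
  · rw [crossSign, crossSign, if_pos hup, if_pos hup, hup]
    simp only [eq_sub_iff_add_eq]
  by_cases hdown : d.fst.1 = d.snd.1 + 1
  · rw [crossSign, crossSign, if_neg hup, if_neg hup, if_pos hdown, if_pos hdown, hdown]
    simp only [eq_sub_iff_add_eq]
    split_ifs <;> norm_num
  rw [crossSign, crossSign, if_neg hup, if_neg hup, if_neg hdown, if_neg hdown,
    row_eq_of_adj d.adj hup hdown, sub_self, sub_self]

theorem netFlow_sub_one_sub {u v : ZMod r × Fin c} (p : (cylGraph r c).Walk u v) (k : ZMod r) :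
    netFlow p (k - 1) - netFlow p k = (if v.1 = k then 1 else 0) - (if u.1 = k then 1 else 0) := by
  induction p with
  | nil => simp [netFlow]
  | cons h p ih =>
    simp only [netFlow, Walk.darts_cons, List.map_cons, List.sum_cons] at ih ⊢
    linear_combination ih + crossSign_sub_one_sub k ⟨(_, _), h⟩

theorem exists_netFlow_eq [NeZero r] {j : Fin c} {v : ZMod r × Fin c}
    (p : (cylGraph r c).Walk (0, j) v) :
    ∃ N : ℤ, ∀ h < r, netFlow p h = N + if h < v.1.val then 1 else 0 := by
  refine ⟨netFlow p 0 - if 0 < v.1.val then 1 else 0, fun h hh => ?_⟩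
  induction h with
  | zero => simp
  | succ h ih =>
    have hflow := netFlow_sub_one_sub p (h + 1 : ℕ)
    rw [Nat.cast_add_one, add_sub_cancel_right, ← Nat.cast_add_one] at hflow
    simp only [ZMod.eq_natCast_iff_val_eq hh, ZMod.val_zero] at hflow
    have := ih (by omega)
    split_ifs at * <;> omega

theorem crossings_modEq_netFlow {u v : ZMod r × Fin c} (p : (cylGraph r c).Walk u v)
    (k : ZMod r) : (crossings p k : ℤ) ≡ netFlow p k [ZMOD 2] := by
  have := (p.darts.map (crossSign k)).countP_ne_zero_modEq_sum
    (by simpa using fun d _ => abs_crossSign_le k d)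
  rwa [List.countP_map] at this

variable [Fact (1 < r)]

theorem row_ne_of_eq_add_one {a b : ZMod r} (h : b = a + 1) : a ≠ b := by
  simp [h]

theorem edge_mem_cutEdges {k : ZMod r} {d : (cylGraph r c).Dart} (hd : crossSign k d ≠ 0) :
    d.edge ∈ cutEdges k := by
  obtain ⟨⟨⟨a, i⟩, b, j⟩, hadj⟩ := d
  unfold crossSign at hd
  simp only [cutEdges, mem_image, mem_univ, true_and, Dart.edge_mk]
  split_ifs at hd with hup hk hdown hk' <;> try contradiction
  · obtain rfl : i = j := col_eq_of_row_ne hadj (row_ne_of_eq_add_one hup)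
    exact ⟨i, by rw [← hk, ← hup]⟩
  · obtain rfl : i = j := col_eq_of_row_ne hadj (row_ne_of_eq_add_one hdown).symm
    exact ⟨i, by rw [← hk', ← hdown, Sym2.eq_swap]⟩

theorem crossings_le {u v : ZMod r × Fin c} {p : (cylGraph r c).Walk u v} (hp : p.IsTrail)
    (k : ZMod r) : crossings p k ≤ c := by
  classical
  calc crossings p k
      ≤ p.darts.countP (fun d => d.edge ∈ cutEdges k) :=
        List.countP_mono_left fun d _ hd => by simpa using edge_mem_cutEdges (by simpa using hd)
    _ ≤ #(cutEdges k) := hp.countP_darts_edge_mem_le _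
    _ ≤ c := card_image_le.trans (by simp)

theorem card_filter_crossSign_ne_zero (d : (cylGraph r c).Dart) :
    #{h ∈ range r | crossSign ((h : ℕ) : ZMod r) d ≠ 0} = if d.fst.1 ≠ d.snd.1 then 1 else 0 := by
  obtain ⟨⟨⟨a, i⟩, b, j⟩, hadj⟩ := d
  by_cases hup : b = a + 1
  · simp only [crossSign, if_pos hup, ne_eq, ite_eq_right_iff, one_ne_zero, imp_false, not_not]
    rw [ZMod.card_filter_range_eq_natCast, if_pos (row_ne_of_eq_add_one hup)]
  by_cases hdown : a = b + 1
  · simp only [crossSign, if_neg hup, if_pos hdown, ne_eq, ite_eq_right_iff, neg_eq_zero,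
      one_ne_zero, imp_false, not_not]
    rw [ZMod.card_filter_range_eq_natCast, if_pos (row_ne_of_eq_add_one hdown).symm]
  · obtain rfl : a = b := row_eq_of_adj hadj hup hdown
    simp [crossSign]

theorem sum_crossings {u v : ZMod r × Fin c} (p : (cylGraph r c).Walk u v) :
    ∑ h ∈ range r, crossings p h = p.darts.countP (fun d => d.fst.1 ≠ d.snd.1) :=
  sum_countP_eq_countP _ _ _ _ fun d _ => by simpa using card_filter_crossSign_ne_zero d

theorem countP_horizontal_modEq {u v : ZMod r × Fin c} (p : (cylGraph r c).Walk u v) :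
    (p.darts.countP (fun d => d.fst.1 = d.snd.1) : ℤ) ≡ (v.2 : ℕ) - (u.2 : ℕ) [ZMOD 2] := by
  induction p with
  | nil => simp [Int.ModEq]
  | @cons a b w hadj p ih =>
    rw [Walk.darts_cons, List.countP_cons]
    unfold Int.ModEq at *
    rcases adj_cases hadj with ⟨hcol, hrow⟩ | ⟨hrow, hcol⟩
    · have hne : a.1 ≠ b.1 := by
        rcases hrow with h | h
        exacts [row_ne_of_eq_add_one h, (row_ne_of_eq_add_one h).symm]
      rw [if_neg (by simpa using hne), hcol]
      omega
    · rw [if_pos (by simpa using hrow)]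
      push_cast
      omega

end cylGraph

open cylGraph

/-- Any Hamiltonian path in the `r × c` cylinder graph (`r, c ≥ 2`) starting at `(0,0)`,
ending in the last column, and using at most `(c−1) + 2m` horizontal edges must end at a
row in `A_{r,c,m} = {(c + 2m − 2i) mod r : 0 ≤ i ≤ c + 2m}`. -/
theorem stmt_16 (r c m : ℕ) (hr : 2 ≤ r) (hc : 2 ≤ c) (x : ZMod r)
    (w : (cylGraph r c).Walk (0, ⟨0, by omega⟩) (x, ⟨c - 1, by omega⟩))
    (hw : w.IsHamiltonian)
    (hcost : w.darts.countP (fun d => decide (d.toProd.1.1 = d.toProd.2.1)) ≤ (c - 1) + 2 * m) :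
    ∃ i : ℕ, i ≤ c + 2 * m ∧ x = (((c : ℤ) + 2 * m - 2 * i : ℤ) : ZMod r) := by
  have : Fact (1 < r) := ⟨hr⟩
  set H := w.darts.countP (fun d => d.fst.1 = d.snd.1)
  obtain ⟨N, hN⟩ := exists_netFlow_eq w
  obtain ⟨y, hyx, hyD, hyD2⟩ := exists_modEq_abs_le_sum_sub (ZMod.val_lt x).le
    (fun h _ => crossings_le hw.isPath.isTrail h)
    (fun h hh => (crossings_modEq_netFlow w h).trans (by rw [hN h hh]))
  have hlen : H + ∑ h ∈ range r, crossings w h = r * c - 1 := by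
    have hsplit := w.darts.length_eq_countP_add_countP (fun d => d.fst.1 = d.snd.1)
    rw [Walk.length_darts, hw.length_eq, Fintype.card_prod, ZMod.card, Fintype.card_fin] at hsplit
    rw [sum_crossings, hsplit]
    simp [H]
  have hD : ∑ h ∈ range r, ((c : ℤ) - crossings w h) = H + 1 := by
    rw [sum_sub_distrib, sum_const, card_range, nsmul_eq_mul, ← Nat.cast_sum]
    have : 1 ≤ r * c := Nat.one_le_iff_ne_zero.2 (by positivity)
    omega
  have hH : (H : ℤ) ≡ (c - 1 : ℕ) [ZMOD 2] := by simpa using countP_horizontal_modEq w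
  obtain ⟨i, hi, rfl⟩ := Int.exists_eq_sub_two_mul (y := y) (n := c + 2 * m) (by omega) (by
    unfold Int.ModEq at *
    omega)
  refine ⟨i, by omega, ?_⟩
  rw [← ZMod.natCast_zmod_val x, ← Int.cast_natCast, ZMod.intCast_eq_intCast_iff]
  exact hyx.symm
end
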